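/- arXiv:2107.05175 — 11 statements merged into one kernel-verified Lean document; each statement's English description precedes it below -/
import Mathlib

section
/- There is no deterministic strategyproof mechanism with a finite approximation ratio for minimizing the maximum difference between total group costs. Specifically, for any deterministic strategyproof mechanism f mapping profiles of two agents (one in group 1, one in group 2) to a real number, there exists a profile where the objective value of f's output is strictly positive while the optimal objective value is 0. -/
/-- Objective (a)(i) for two singleton groups: difference between the larger
and the smaller total group cost. -/
def objDiff (y x1 x2 : ℝ) : ℝ := max |y - x1| |y - x2| - min |y - x1| |y - x2|

/-- Strategyproofness for a two-agent deterministic mechanism (agent 1 in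
group 1, agent 2 in group 2): no agent benefits from misreporting. -/
def Strategyproof2 (f : ℝ → ℝ → ℝ) : Prop :=
  ∀ x1 x2 x' : ℝ,
    |f x1 x2 - x1| ≤ |f x' x2 - x1| ∧ |f x1 x2 - x2| ≤ |f x1 x' - x2|

/-- No deterministic strategyproof mechanism has a finite approximation ratio
for the max-minus-min total group cost objective: there is a profile where the
optimum is 0 but the mechanism's objective value is strictly positive. -/
theorem stmt0 (f : ℝ → ℝ → ℝ) (hf : Strategyproof2 f) :
    ∃ x1 x2 : ℝ, (∃ y : ℝ, objDiff y x1 x2 = 0) ∧ 0 < objDiff (f x1 x2) x1 x2 := by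
  by_cases h : f 0 2 = 1
  · -- then by strategyproofness f (-2) 2 has |·| ≥ 1, so it's not the midpoint 0
    have h1 := (hf 0 2 (-2)).1
    rw [h] at h1
    have hne : f (-2) 2 ≠ 0 := by
      intro h0; rw [h0] at h1; norm_num at h1
    refine ⟨-2, 2, ⟨0, by norm_num [objDiff]⟩, ?_⟩
    unfold objDiff
    have : |f (-2) 2 - -2| ≠ |f (-2) 2 - 2| := by
      intro heq
      rcases abs_eq_abs.mp heq with h' | h' <;> [linarith; (apply hne; linarith)]
    have := min_lt_max.mpr this
    linarith
  · refine ⟨0, 2, ⟨1, by norm_num [objDiff]⟩, ?_⟩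
    unfold objDiff
    have : |f 0 2 - 0| ≠ |f 0 2 - 2| := by
      intro heq
      rcases abs_eq_abs.mp heq with h' | h' <;> [linarith; (apply h; linarith)]
    have := min_lt_max.mpr this
    linarith
end

section
/- The Majority Group Deterministic Mechanism (MGDM), which places the facility at the median location of a largest group, is strategyproof: no agent can strictly decrease her distance to the facility by misreporting her location. -/
open Finset

variable {n m : ℕ}

/-- Members of group `j`. -/
def grp (g : Fin n → Fin m) (j : Fin m) : Finset (Fin n) :=
  Finset.univ.filter (fun i => g i = j)

/-- Maximum total group cost. -/
noncomputable def mtgc (x : Fin n → ℝ) (g : Fin n → Fin m) (y : ℝ) : ℝ :=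
  ⨆ j : Fin m, ∑ i ∈ grp g j, |y - x i|

/-- Maximum average group cost. -/
noncomputable def magc (x : Fin n → ℝ) (g : Fin n → Fin m) (y : ℝ) : ℝ :=
  ⨆ j : Fin m, (∑ i ∈ grp g j, |y - x i|) / (grp g j).card

/-- Left median of a multiset of reals (`⌈k/2⌉`-th smallest). -/
noncomputable def medianOf (s : Multiset ℝ) : ℝ :=
  (s.sort (· ≤ ·)).getD ((Multiset.card s - 1) / 2) 0

/-- Left median of the locations of the members of group `j`. -/
noncomputable def groupMedian (x : Fin n → ℝ) (g : Fin n → Fin m) (j : Fin m) : ℝ :=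
  medianOf ((grp g j).val.map x)

/-- A largest group, ties broken by the smallest index. -/
noncomputable def majGroup (g : Fin n → Fin m) [NeZero m] : Fin m :=
  (Finset.univ.filter
    (fun j => ∀ k : Fin m, (grp g k).card ≤ (grp g j).card)).min' (by
      obtain ⟨b, -, hb⟩ :=
        Finset.exists_max_image Finset.univ (fun j => (grp g j).card) Finset.univ_nonempty
      exact ⟨b, Finset.mem_filter.mpr ⟨Finset.mem_univ _, fun k => hb k (Finset.mem_univ k)⟩⟩)

/-- Majority Group Deterministic Mechanism. -/
noncomputable def MGDM (x : Fin n → ℝ) (g : Fin n → Fin m) [NeZero m] : ℝ :=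
  groupMedian x g (majGroup g)

noncomputable def avgc (x : Fin n → ℝ) (g : Fin n → Fin m) (j : Fin m) (y : ℝ) : ℝ :=
  (∑ i ∈ grp g j, |y - x i|) / (grp g j).card

noncomputable def maxc (x : Fin n → ℝ) (g : Fin n → Fin m) (j : Fin m) (y : ℝ) : ℝ :=
  sSup ((fun i => |y - x i|) '' {i | g i = j})

noncomputable def minc (x : Fin n → ℝ) (g : Fin n → Fin m) (j : Fin m) (y : ℝ) : ℝ :=
  sInf ((fun i => |y - x i|) '' {i | g i = j})

noncomputable def IIF1 (x : Fin n → ℝ) (g : Fin n → Fin m) (y : ℝ) : ℝ :=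
  (⨆ j : Fin m, avgc x g j y) + ⨆ j : Fin m, (maxc x g j y - minc x g j y)

/-! For a lower set `S`, the `k`-th smallest element of a sorted list lies in `S` exactly when
more than `k` elements do. An agent strictly left of the median `μ` already counts towards
`Iio μ`, so no report of hers can pull the median below `μ`; symmetrically, an agent strictly
right of `μ` is not counted in `Iic μ`, so she cannot push it above `μ`. Agents outside the
selected group do not enter its median at all, and the selection ignores locations. -/

theorem IsLowerSet.getElem_mem_iff_lt_countP {α : Type*} [Preorder α] {S : Set α}
    [DecidablePred (· ∈ S)] (hS : IsLowerSet S) {L : List α} (hL : L.Pairwise (· ≤ ·))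
    {k : ℕ} (hk : k < L.length) : L[k] ∈ S ↔ k < L.countP (· ∈ S) := by
  have hsplit : L = L.take k ++ L[k] :: L.drop (k + 1) := by
    rw [← List.drop_eq_getElem_cons, List.take_append_drop]
  have hcount : L.countP (· ∈ S) = (L.take k).countP (· ∈ S) +
      (if L[k] ∈ S then 1 else 0) + (L.drop (k + 1)).countP (· ∈ S) := by
    conv_lhs => rw [hsplit]
    simp only [List.countP_append, List.countP_cons, decide_eq_true_eq]
    omega
  rw [hsplit, List.pairwise_append, List.pairwise_cons] at hL
  obtain ⟨-, ⟨below_drop, -⟩, take_below⟩ := hL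
  have htake : (L.take k).length = k := List.length_take_of_le hk.le
  constructor
  · intro hmem
    have : (L.take k).countP (· ∈ S) = k := by
      refine (List.countP_eq_length.2 fun a ha => ?_).trans htake
      exact decide_eq_true (hS (take_below a ha L[k] List.mem_cons_self) hmem)
    simp only [hmem, if_true] at hcount
    omega
  · intro hlt
    by_contra hnot
    have : (L.drop (k + 1)).countP (· ∈ S) = 0 :=
      List.countP_eq_zero.2 fun b hb hbS => hnot (hS (below_drop b hb) (of_decide_eq_true hbS))
    have := (L.take k).countP_le_length (p := (· ∈ S))
    simp only [hnot, if_false] at hcount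
    omega

theorem IsLowerSet.medianOf_mem_iff {S : Set ℝ} [DecidablePred (· ∈ S)] (hS : IsLowerSet S)
    {s : Multiset ℝ} (hs : s ≠ 0) :
    medianOf s ∈ S ↔ (Multiset.card s - 1) / 2 < s.countP (· ∈ S) := by
  have hk : (Multiset.card s - 1) / 2 < (s.sort (· ≤ ·)).length := by
    rw [Multiset.length_sort]
    have := Multiset.card_pos.2 hs
    omega
  rw [medianOf, List.getD_eq_getElem _ _ hk,
    hS.getElem_mem_iff_lt_countP (Multiset.pairwise_sort s _) hk, ← Multiset.coe_countP,
    Multiset.sort_eq]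

section MedianCons

variable {S : Set ℝ} [DecidablePred (· ∈ S)] {t : Multiset ℝ} {a : ℝ}

theorem IsLowerSet.medianOf_cons_mem_of_mem {a' : ℝ} (hS : IsLowerSet S) (ha : a ∈ S)
    (h : medianOf (a' ::ₘ t) ∈ S) : medianOf (a ::ₘ t) ∈ S := by
  rw [hS.medianOf_mem_iff Multiset.cons_ne_zero] at h ⊢
  simp only [Multiset.card_cons, Multiset.countP_cons, ha, if_true] at h ⊢
  split_ifs at h <;> omega

theorem IsLowerSet.medianOf_cons_mem_of_notMem (hS : IsLowerSet S) (ha : a ∉ S)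
    (h : medianOf (a ::ₘ t) ∈ S) (a' : ℝ) : medianOf (a' ::ₘ t) ∈ S := by
  rw [hS.medianOf_mem_iff Multiset.cons_ne_zero] at h ⊢
  simp only [Multiset.card_cons, Multiset.countP_cons, ha, if_false] at h ⊢
  split_ifs <;> omega

end MedianCons

theorem abs_medianOf_cons_sub_le (t : Multiset ℝ) (a a' : ℝ) :
    |medianOf (a ::ₘ t) - a| ≤ |medianOf (a' ::ₘ t) - a| := by
  set μ := medianOf (a ::ₘ t)
  set μ' := medianOf (a' ::ₘ t)
  have hle_abs := le_abs_self (μ' - a)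
  have hneg_abs_le := neg_abs_le (μ' - a)
  rcases lt_trichotomy a μ with hlt | heq | hgt
  · have : μ ≤ μ' := not_lt.1 fun h =>
      lt_irrefl μ ((isLowerSet_Iio μ).medianOf_cons_mem_of_mem hlt h)
    rw [abs_le]
    constructor <;> linarith
  · rw [← heq, sub_self, abs_zero]
    exact abs_nonneg _
  · have : μ' ≤ μ := (isLowerSet_Iic μ).medianOf_cons_mem_of_notMem hgt.not_ge
      Set.self_mem_Iic a'
    rw [abs_le]
    constructor <;> linarith

namespace Finset

variable {ι β : Type*} [DecidableEq ι]

theorem map_val_update_of_mem {s : Finset ι} {i : ι} (hi : i ∈ s) (x : ι → β) (b : β) :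
    s.val.map (Function.update x i b) = b ::ₘ (s.erase i).val.map x := by
  conv_lhs => rw [← insert_erase hi]
  rw [insert_val_of_notMem (notMem_erase i s), Multiset.map_cons, Function.update_self]
  exact congrArg _
    (Multiset.map_congr rfl fun _ ha => Function.update_of_ne (ne_of_mem_erase ha) _ _)

theorem map_val_update_of_notMem {s : Finset ι} {i : ι} (hi : i ∉ s) (x : ι → β) (b : β) :
    s.val.map (Function.update x i b) = s.val.map x :=
  Multiset.map_congr rfl fun _ ha => Function.update_of_ne (ne_of_mem_of_not_mem ha hi) _ _

end Finset

theorem abs_medianOf_map_update_sub_le {ι : Type*} [DecidableEq ι] (s : Finset ι)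
    (x : ι → ℝ) (i : ι) (b : ℝ) :
    |medianOf (s.val.map x) - x i| ≤ |medianOf (s.val.map (Function.update x i b)) - x i| := by
  by_cases hi : i ∈ s
  · have hx := s.map_val_update_of_mem hi x (x i)
    rw [Function.update_eq_self] at hx
    rw [hx, s.map_val_update_of_mem hi]
    exact abs_medianOf_cons_sub_le _ _ _
  · rw [s.map_val_update_of_notMem hi]

/-- MGDM is strategyproof: no agent can strictly decrease her distance to the
facility by misreporting her location (group memberships are fixed). -/
theorem stmt2 [NeZero m] (x : Fin n → ℝ) (g : Fin n → Fin m) (i : Fin n) (x' : ℝ) :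
    |MGDM x g - x i| ≤ |MGDM (Function.update x i x') g - x i| :=
  abs_medianOf_map_update_sub_le (grp g (majGroup g)) x i x'
end

section
/- MGDM has approximation ratio at most 3 for the maximum total group cost objective: for any profile r, mtgc(y, r) <= 3 * mtgc(y*, r), where y is the median of a largest group and y* is any point minimizing mtgc. -/
open Finset

variable {n m : ℕ}

/-!
Let `y` be the median of a largest group `G_g`. Moving the facility from any `y*` to `y` raises
the total cost of a group `G_j` by at most `|G_j| * |y - y*| ≤ |G_g| * |y - y*|`. Since at least
half of `G_g` lies weakly on the far side of `y` as seen from `y*`, each of those agents pays at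
least `|y - y*|` at `y*`, so `|G_g| * |y - y*| ≤ 2 * mtgc(y*)`. Hence `mtgc(y) ≤ 3 * mtgc(y*)`.
-/

namespace List

variable {α : Type*} [Preorder α] [DecidableLE α] {l : List α}

theorem SortedLE.succ_le_countP_le_getElem (hl : l.SortedLE) {i : ℕ} (hi : i < l.length) :
    i + 1 ≤ l.countP (· ≤ l[i]) := by
  have htake : ∀ a ∈ l.take (i + 1), a ≤ l[i] := by
    intro a ha
    obtain ⟨j, hj, rfl⟩ := mem_take_iff_getElem.1 ha
    exact hl.getElem_le_getElem_of_le (by omega)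
  calc i + 1 = (l.take (i + 1)).countP (· ≤ l[i]) := by
        rw [countP_eq_length.2 (by simpa using htake), length_take]; omega
    _ ≤ l.countP (· ≤ l[i]) := (take_sublist _ _).countP_le

theorem SortedLE.length_sub_le_countP_getElem_le (hl : l.SortedLE) {i : ℕ} (hi : i < l.length) :
    l.length - i ≤ l.countP (l[i] ≤ ·) := by
  have hdrop : ∀ a ∈ l.drop i, l[i] ≤ a := by
    intro a ha
    obtain ⟨j, hj, rfl⟩ := mem_drop_iff_getElem.1 ha
    exact hl.getElem_le_getElem_of_le (by omega)
  calc l.length - i = (l.drop i).countP (l[i] ≤ ·) := by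
        rw [countP_eq_length.2 (by simpa using hdrop), length_drop]
    _ ≤ l.countP (l[i] ≤ ·) := (drop_sublist _ _).countP_le

end List

namespace Multiset

theorem countP_nsmul_le_sum_map {α M : Type*} [AddCommMonoid M] [PartialOrder M]
    [IsOrderedAddMonoid M] (s : Multiset α) (p : α → Prop) [DecidablePred p] {f : α → M} {c : M}
    (hf : ∀ a, 0 ≤ f a) (hc : ∀ a, p a → c ≤ f a) : s.countP p • c ≤ (s.map f).sum := by
  induction s using Multiset.induction_on with
  | empty => simp
  | cons a s ih =>
    rw [countP_cons, map_cons, sum_cons, add_nsmul, add_comm]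
    split_ifs with ha
    · simpa using add_le_add (hc a ha) ih
    · simpa using add_le_add (hf a) ih

theorem sortedLE_sort {α : Type*} [LinearOrder α] (s : Multiset α) :
    (s.sort (· ≤ ·)).SortedLE :=
  List.sortedLE_iff_pairwise.2 (s.pairwise_sort _)

theorem countP_sort {α : Type*} [LinearOrder α] (s : Multiset α) (p : α → Prop)
    [DecidablePred p] : (s.sort (· ≤ ·)).countP p = s.countP p := by
  conv_rhs => rw [← s.sort_eq (· ≤ ·)]
  exact (coe_countP _ _).symm

end Multiset

theorem medianOf_eq_getElem {s : Multiset ℝ} (hs : s ≠ 0) :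
    medianOf s = (s.sort (· ≤ ·))[(Multiset.card s - 1) / 2]'(by
      rw [Multiset.length_sort]; have := Multiset.card_pos.2 hs; omega) :=
  List.getD_eq_getElem _ _ _

theorem card_le_two_mul_countP_le_medianOf (s : Multiset ℝ) :
    Multiset.card s ≤ 2 * s.countP (· ≤ medianOf s) := by
  obtain rfl | hs := eq_or_ne s 0
  · simp
  have hcard := Multiset.card_pos.2 hs
  have hlen := s.length_sort (· ≤ ·)
  rw [← Multiset.countP_sort, medianOf_eq_getElem hs]
  have := s.sortedLE_sort.succ_le_countP_le_getElem (i := (Multiset.card s - 1) / 2) (by omega)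
  omega

theorem card_le_two_mul_countP_medianOf_le (s : Multiset ℝ) :
    Multiset.card s ≤ 2 * s.countP (medianOf s ≤ ·) := by
  obtain rfl | hs := eq_or_ne s 0
  · simp
  have hcard := Multiset.card_pos.2 hs
  have hlen := s.length_sort (· ≤ ·)
  rw [← Multiset.countP_sort, medianOf_eq_getElem hs]
  have := s.sortedLE_sort.length_sub_le_countP_getElem_le (i := (Multiset.card s - 1) / 2)
    (by omega)
  omega

theorem card_mul_abs_medianOf_sub_le (s : Multiset ℝ) (z : ℝ) :
    Multiset.card s * |medianOf s - z| ≤ 2 * (s.map fun t => |z - t|).sum := by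
  set y := medianOf s
  rcases le_total z y with hzy | hyz
  · have hhalf : (Multiset.card s : ℝ) ≤ 2 * s.countP (y ≤ ·) := by
      exact_mod_cast card_le_two_mul_countP_medianOf_le s
    have hfar := s.countP_nsmul_le_sum_map (y ≤ ·) (f := fun t => |z - t|) (c := y - z)
      (fun _ => abs_nonneg _) fun t ht => by rw [abs_sub_comm]; exact le_abs.2 (.inl (by linarith))
    calc Multiset.card s * |y - z| ≤ 2 * s.countP (y ≤ ·) * (y - z) := by
          rw [abs_of_nonneg (sub_nonneg.2 hzy)]
          exact mul_le_mul_of_nonneg_right hhalf (sub_nonneg.2 hzy)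
      _ ≤ _ := by rw [nsmul_eq_mul] at hfar; linarith
  · have hhalf : (Multiset.card s : ℝ) ≤ 2 * s.countP (· ≤ y) := by
      exact_mod_cast card_le_two_mul_countP_le_medianOf s
    have hfar := s.countP_nsmul_le_sum_map (· ≤ y) (f := fun t => |z - t|) (c := z - y)
      (fun _ => abs_nonneg _) fun t ht => le_abs.2 (.inl (by linarith))
    calc Multiset.card s * |y - z| ≤ 2 * s.countP (· ≤ y) * (z - y) := by
          rw [abs_sub_comm, abs_of_nonneg (sub_nonneg.2 hyz)]
          exact mul_le_mul_of_nonneg_right hhalf (sub_nonneg.2 hyz)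
      _ ≤ _ := by rw [nsmul_eq_mul] at hfar; linarith

theorem Finset.sum_abs_sub_le_sum_abs_sub_add_card_mul {ι : Type*} (s : Finset ι) (x : ι → ℝ)
    (y z : ℝ) : ∑ i ∈ s, |y - x i| ≤ ∑ i ∈ s, |z - x i| + #s * |y - z| := by
  calc ∑ i ∈ s, |y - x i| ≤ ∑ i ∈ s, (|z - x i| + |y - z|) :=
        sum_le_sum fun i _ => (abs_sub_le y z (x i)).trans_eq (add_comm _ _)
    _ = ∑ i ∈ s, |z - x i| + #s * |y - z| := by
        rw [sum_add_distrib, sum_const, nsmul_eq_mul]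

theorem sum_grp_le_mtgc (x : Fin n → ℝ) (g : Fin n → Fin m) (j : Fin m) (y : ℝ) :
    ∑ i ∈ grp g j, |y - x i| ≤ mtgc x g y :=
  le_ciSup (f := fun j => ∑ i ∈ grp g j, |y - x i|) (Set.finite_range _).bddAbove j

theorem card_grp_le_card_grp_majGroup [NeZero m] (g : Fin n → Fin m) (j : Fin m) :
    #(grp g j) ≤ #(grp g (majGroup g)) :=
  (mem_filter.1 (min'_mem (univ.filter fun j => ∀ k, #(grp g k) ≤ #(grp g j)) _)).2 j

theorem card_mul_abs_groupMedian_sub_le (x : Fin n → ℝ) (g : Fin n → Fin m) (j : Fin m)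
    (z : ℝ) : #(grp g j) * |groupMedian x g j - z| ≤ 2 * ∑ i ∈ grp g j, |z - x i| := by
  simpa [groupMedian, Multiset.map_map] using card_mul_abs_medianOf_sub_le ((grp g j).val.map x) z

theorem stmt4_general [NeZero m] (x : Fin n → ℝ) (g : Fin n → Fin m) (ystar : ℝ) :
    mtgc x g (MGDM x g) ≤ 3 * mtgc x g ystar := by
  have hmed : (#(grp g (majGroup g)) : ℝ) * |MGDM x g - ystar| ≤ 2 * mtgc x g ystar :=
    (card_mul_abs_groupMedian_sub_le x g _ ystar).trans
      (mul_le_mul_of_nonneg_left (sum_grp_le_mtgc x g _ ystar) zero_le_two)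
  refine ciSup_le fun j => ?_
  have hmaj : (#(grp g j) : ℝ) ≤ #(grp g (majGroup g)) := by
    exact_mod_cast card_grp_le_card_grp_majGroup g j
  calc ∑ i ∈ grp g j, |MGDM x g - x i|
      ≤ ∑ i ∈ grp g j, |ystar - x i| + #(grp g j) * |MGDM x g - ystar| :=
        sum_abs_sub_le_sum_abs_sub_add_card_mul _ _ _ _
    _ ≤ mtgc x g ystar + #(grp g (majGroup g)) * |MGDM x g - ystar| := by
        gcongr
        exact sum_grp_le_mtgc x g j ystar
    _ ≤ 3 * mtgc x g ystar := by linarith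

/-- MGDM has approximation ratio at most 3 for the maximum total group cost. -/
theorem stmt4 [NeZero m] (x : Fin n → ℝ) (g : Fin n → Fin m) (ystar : ℝ)
    (hopt : ∀ z : ℝ, mtgc x g ystar ≤ mtgc x g z) :
    mtgc x g (MGDM x g) ≤ 3 * mtgc x g ystar :=
  stmt4_general x g ystar
end

section
/- For the profile with one agent at 0 and n-1 agents at 1, all in a single group, the leftmost mechanism (placing the facility at the leftmost reported location, i.e., at 0) achieves maximum total group cost n-1, while placing the facility at 1 achieves the optimal maximum total group cost of 1. Hence the leftmost mechanism has approximation ratio at least n-1 for mtgc. -/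
open Finset

variable {n m : ℕ}

lemma grp_eq_univ_of_fin_one (g : Fin n → Fin 1) (j : Fin 1) : grp g j = univ := by
  ext i
  simp [grp, Subsingleton.elim (g i) j]

lemma mtgc_of_fin_one (x : Fin n → ℝ) (g : Fin n → Fin 1) (y : ℝ) :
    mtgc x g y = ∑ i, |y - x i| := by
  rw [mtgc, ciSup_unique, grp_eq_univ_of_fin_one]

lemma sum_abs_sub_of_cons {k : ℕ} (x : Fin (k + 1) → ℝ) {a b : ℝ} (h0 : x 0 = a)
    (hsucc : ∀ i : Fin k, x i.succ = b) (y : ℝ) :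
    ∑ i, |y - x i| = |y - a| + k * |y - b| := by
  simp [Fin.sum_univ_succ, h0, hsucc]

lemma one_le_abs_add_mul_abs_sub_one {c : ℝ} (hc : 1 ≤ c) (y : ℝ) : 1 ≤ |y| + c * |y - 1| :=
  calc (1 : ℝ) = |y - (y - 1)| := by norm_num
    _ ≤ |y| + |y - 1| := abs_sub _ _
    _ ≤ |y| + c * |y - 1| := by gcongr; exact le_mul_of_one_le_left (abs_nonneg _) hc

/-- With one agent at `0` and `n - 1` agents at `1`, all in a single group,
the leftmost mechanism (facility at `0`) gets `mtgc = n - 1` while `1` is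
optimal with value `1`; hence LDM has approximation ratio at least `n - 1`. -/
theorem stmt6 (n : ℕ) (hn : 2 ≤ n) (x : Fin n → ℝ) (g : Fin n → Fin 1)
    (hx : ∀ i : Fin n, x i = if (i : ℕ) = 0 then 0 else 1) :
    mtgc x g 0 = (n : ℝ) - 1 ∧ mtgc x g 1 = 1 ∧ ∀ y : ℝ, 1 ≤ mtgc x g y := by
  obtain ⟨k, rfl⟩ : ∃ k, n = k + 1 := ⟨n - 1, by omega⟩
  have hcost : ∀ y, mtgc x g y = |y| + k * |y - 1| := fun y => by
    rw [mtgc_of_fin_one, sum_abs_sub_of_cons x (a := 0) (b := 1) (by simp [hx])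
      (fun i => by simp [hx]), sub_zero]
  have hk : (1 : ℝ) ≤ k := by exact_mod_cast (by omega : 1 ≤ k)
  refine ⟨by simp [hcost], by simp [hcost], fun y => ?_⟩
  rw [hcost]
  exact one_le_abs_add_mul_abs_sub_one hk y
end

section
/- Any deterministic strategyproof mechanism for two agents in distinct groups on the real line has approximation ratio at least 2 for the maximum total group cost objective. -/
/-- Maximum total group cost for two agents in distinct singleton groups. -/
def mtgc2 (y x1 x2 : ℝ) : ℝ := max |y - x1| |y - x2|

lemma mid_val (x1 x2 : ℝ) (h : x1 ≤ x2) :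
    mtgc2 ((x1 + x2) / 2) x1 x2 = (x2 - x1) / 2 := by
  unfold mtgc2
  rw [show (x1 + x2) / 2 - x1 = (x2 - x1) / 2 by ring,
      show (x1 + x2) / 2 - x2 = -((x2 - x1) / 2) by ring,
      abs_neg, abs_of_nonneg (by linarith), max_self]

lemma mid_opt (x1 x2 : ℝ) (h : x1 ≤ x2) :
    ∀ z : ℝ, mtgc2 ((x1 + x2) / 2) x1 x2 ≤ mtgc2 z x1 x2 := by
  intro z
  rw [mid_val x1 x2 h]
  have h1 : z - x1 ≤ |z - x1| := le_abs_self _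
  have h2 : x2 - z ≤ |z - x2| := by
    have := neg_abs_le (z - x2); linarith
  have hm1 : |z - x1| ≤ mtgc2 z x1 x2 := le_max_left _ _
  have hm2 : |z - x2| ≤ mtgc2 z x1 x2 := le_max_right _ _
  linarith

/-- Any deterministic strategyproof mechanism for two agents in distinct
groups has approximation ratio at least 2 for the maximum total group cost:
for any `c < 2` there is a profile on which the mechanism's objective exceeds
`c` times the optimum. -/
theorem stmt7 (f : ℝ → ℝ → ℝ) (hf : Strategyproof2 f) (c : ℝ) (hc : c < 2) :
    ∃ x1 x2 ystar : ℝ, (∀ z : ℝ, mtgc2 ystar x1 x2 ≤ mtgc2 z x1 x2) ∧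
      c * mtgc2 ystar x1 x2 < mtgc2 (f x1 x2) x1 x2 := by
  set a := f 0 1 with ha
  rcases le_total (1/2 : ℝ) a with hhalf | hhalf
  · -- profile (0, a)
    have h0a : (0:ℝ) ≤ a := by linarith
    refine ⟨0, a, (0 + a) / 2, mid_opt 0 a h0a, ?_⟩
    have hfa : f 0 a = a := by
      have := (hf 0 a 1).2
      rw [← ha, sub_self, abs_zero] at this
      have : |f 0 a - a| = 0 := le_antisymm this (abs_nonneg _)
      have := abs_eq_zero.mp this
      linarith
    rw [mid_val 0 a h0a, hfa]
    unfold mtgc2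
    rw [sub_zero, sub_self, abs_zero, abs_of_nonneg h0a,
        max_eq_left h0a]
    nlinarith
  · -- profile (a, 1)
    have h1a : a ≤ 1 := by linarith
    refine ⟨a, 1, (a + 1) / 2, mid_opt a 1 h1a, ?_⟩
    have hfa : f a 1 = a := by
      have := (hf a 1 0).1
      rw [← ha, sub_self, abs_zero] at this
      have : |f a 1 - a| = 0 := le_antisymm this (abs_nonneg _)
      have := abs_eq_zero.mp this
      linarith
    rw [mid_val a 1 h1a, hfa]
    unfold mtgc2
    rw [sub_self, abs_zero]
    have h1 : |a - 1| = 1 - a := by rw [abs_sub_comm, abs_of_nonneg (by linarith)]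
    rw [h1, max_eq_right (by linarith)]
    nlinarith
end

section
/- The Median Deterministic Mechanism (place facility at the median of all n agent locations) has approximation ratio at least m for the maximum total group cost: for each m >= 2 there is a profile with m groups on which the median's mtgc is m times the optimum. -/
open Finset

variable {n m : ℕ}

/-- Median of all agent locations (the `⌈n/2⌉`-th smallest). -/
noncomputable def allMedian (x : Fin n → ℝ) : ℝ :=
  medianOf (Finset.univ.val.map x)

/-! One agent of each group stands at 0 and `m` further agents, all in group 0, stand at 1.
The left median of the `2m` locations is 0, where group 0 pays `m`; the cost function is
`y ↦ |y| + m |y - 1|`, which is minimised at 1 with value 1. -/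

theorem medianOf_replicate_append_replicate {a b : ℝ} (hab : a ≤ b) {k l : ℕ} (hk : 0 < k)
    (hlk : l ≤ k) : medianOf ↑(List.replicate k a ++ List.replicate l b) = a := by
  have hsorted : (List.replicate k a ++ List.replicate l b).Pairwise (· ≤ ·) := by
    refine List.pairwise_append.2 ⟨by simp, by simp, fun c hc d hd => ?_⟩
    rw [List.eq_of_mem_replicate hc, List.eq_of_mem_replicate hd]
    exact hab
  rw [medianOf, Multiset.coe_sort, List.mergeSort_eq_self _ hsorted, Multiset.coe_card,
    List.getD_eq_getElem?_getD, List.getElem?_append_left (by simp; omega)]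
  simp [show (k + l - 1) / 2 < k by omega]

theorem allMedian_append_const {a b : ℝ} (hab : a ≤ b) {k l : ℕ} (hk : 0 < k) (hlk : l ≤ k) :
    allMedian (Fin.append (fun _ : Fin k => a) (fun _ : Fin l => b)) = a := by
  rw [allMedian, Fin.univ_val_map, List.ofFn_fin_append, List.ofFn_const, List.ofFn_const]
  exact medianOf_replicate_append_replicate hab hk hlk

theorem sum_grp_append {k l : ℕ} (g₁ : Fin k → Fin m) (g₂ : Fin l → Fin m) (f : Fin (k + l) → ℝ)
    (j : Fin m) : ∑ i ∈ grp (Fin.append g₁ g₂) j, f i =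
      ∑ i ∈ grp g₁ j, f (Fin.castAdd l i) + ∑ i ∈ grp g₂ j, f (Fin.natAdd k i) := by
  simp only [grp, sum_filter, Fin.sum_univ_add, Fin.append_left, Fin.append_right]

theorem mtgc_eq_of_forall_le (x : Fin n → ℝ) (g : Fin n → Fin m) (y : ℝ) (j₀ : Fin m)
    (h : ∀ j, ∑ i ∈ grp g j, |y - x i| ≤ ∑ i ∈ grp g j₀, |y - x i|) :
    mtgc x g y = ∑ i ∈ grp g j₀, |y - x i| :=
  have : Nonempty (Fin m) := ⟨j₀⟩
  le_antisymm (ciSup_le h) (le_ciSup (f := fun j => ∑ i ∈ grp g j, |y - x i|)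
    (Finite.bddAbove_range _) j₀)

theorem mtgc_append_const (a b y : ℝ) (j₀ : Fin m) :
    mtgc (Fin.append (fun _ : Fin m => a) (fun _ : Fin m => b)) (Fin.append id fun _ => j₀) y
      = |y - a| + m * |y - b| := by
  have hcost : ∀ j, ∑ i ∈ grp (Fin.append id fun _ : Fin m => j₀) j,
      |y - Fin.append (fun _ : Fin m => a) (fun _ : Fin m => b) i|
        = |y - a| + if j = j₀ then m * |y - b| else 0 := by
    intro j
    rw [sum_grp_append]
    have hgrp_id : grp (id : Fin m → Fin m) j = {j} := by ext; simp [grp]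
    have hgrp_const : grp (fun _ : Fin m => j₀) j = if j = j₀ then univ else ∅ := by
      ext; simp [grp, eq_comm]
    simp only [Fin.append_left, Fin.append_right, sum_const, hgrp_id, hgrp_const]
    split_ifs <;> simp
  rw [mtgc_eq_of_forall_le _ _ _ j₀, hcost, if_pos rfl]
  intro j
  rw [hcost, hcost, if_pos rfl]
  split_ifs
  · rfl
  · simp only [add_zero, le_add_iff_nonneg_right]
    positivity

/-- The Median Deterministic Mechanism has approximation ratio at least `m`
for the maximum total group cost: for every `m ≥ 2` there is a profile with
`m` groups where the median's `mtgc` is `m` while the optimum is `1`. -/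
theorem stmt8 (m : ℕ) (hm : 2 ≤ m) :
    ∃ (n : ℕ) (x : Fin n → ℝ) (g : Fin n → Fin m),
      allMedian x = 0 ∧ mtgc x g (allMedian x) = (m : ℝ) ∧
      mtgc x g 1 = 1 ∧ ∀ y : ℝ, mtgc x g 1 ≤ mtgc x g y := by
  have hm0 : 0 < m := by omega
  set x := Fin.append (fun _ : Fin m => (0 : ℝ)) (fun _ : Fin m => 1)
  set g := Fin.append id fun _ : Fin m => (⟨0, hm0⟩ : Fin m)
  have hmedian : allMedian x = 0 := allMedian_append_const zero_le_one hm0 le_rfl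
  have hcost (y : ℝ) : mtgc x g y = |y| + m * |y - 1| := by
    simpa using mtgc_append_const 0 1 y _
  refine ⟨m + m, x, g, hmedian, by simp [hmedian, hcost], by simp [hcost], fun y => ?_⟩
  have hm1 : (1 : ℝ) ≤ m := by exact_mod_cast hm0
  calc mtgc x g 1 = |y - (y - 1)| := by simp [hcost]
    _ ≤ |y| + |y - 1| := abs_sub _ _
    _ ≤ |y| + m * |y - 1| := by gcongr; exact le_mul_of_one_le_left (abs_nonneg _) hm1
    _ = mtgc x g y := (hcost y).symm
end

section
/- For any profile in which the median of all agents x_med and the optimum y* of the maximum average group cost satisfy y* > x_med, there exists a group G_j with at least |G_j|/2 members located at or to the left of x_med, and consequently magc(y*, r) >= (y* - x_med)/2. -/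
open Finset

variable {n m : ℕ}

/-!
At least `⌈n/2⌉` agents lie at or left of `x_med`, and the groups partition the agents, so by
pigeonhole some group `G_j` has at least half of its members there. Each of them is at distance
at least `y - x_med` from `y`, so the average cost of `G_j`, and hence `magc y`, is at least
`(y - x_med)/2`.
-/

theorem List.SortedLE.succ_le_countP_le_getElem_s10 {α : Type*} [Preorder α] [DecidableLE α]
    {l : List α} (hl : l.SortedLE) {k : ℕ} (hk : k < l.length) :
    k + 1 ≤ l.countP (fun a => decide (a ≤ l[k])) := by
  have hprefix : ∀ a ∈ l.take (k + 1), a ≤ l[k] := by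
    intro a ha
    obtain ⟨i, hi, rfl⟩ := List.mem_take_iff_getElem.mp ha
    exact hl (show (⟨i, by omega⟩ : Fin l.length) ≤ ⟨k, hk⟩ from Fin.mk_le_mk.mpr (by omega))
  calc k + 1 = (l.take (k + 1)).length := by rw [List.length_take]; omega
    _ = (l.take (k + 1)).countP (fun a => decide (a ≤ l[k])) :=
      (List.countP_eq_length.mpr (by simpa using hprefix)).symm
    _ ≤ l.countP (fun a => decide (a ≤ l[k])) := (List.take_sublist _ _).countP_le

theorem card_le_two_mul_card_le_allMedian (x : Fin n → ℝ) :
    n ≤ 2 * #{i | x i ≤ allMedian x} := by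
  have := card_le_two_mul_countP_le_medianOf (univ.val.map x)
  rwa [Multiset.countP_map, Multiset.card_map, card_val, card_univ, Fintype.card_fin] at this

theorem sum_card_filter_grp (g : Fin n → Fin m) (p : Fin n → Prop) [DecidablePred p] :
    ∑ j, #{i ∈ grp g j | p i} = #{i | p i} := by
  have (j : Fin m) : {i ∈ grp g j | p i} = ({i ∈ {i | p i} | g i = j} : Finset (Fin n)) := by
    ext i; simp [grp, and_comm]
  simp_rw [this]
  rw [sum_card_fiberwise_eq_card_filter]
  simp

theorem sum_card_grp (g : Fin n → Fin m) : ∑ j, #(grp g j) = n := by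
  simpa using sum_card_filter_grp g (fun _ => True)

theorem exists_grp_card_le_two_mul_card_filter [NeZero m] (g : Fin n → Fin m)
    (p : Fin n → Prop) [DecidablePred p] (h : n ≤ 2 * #{i | p i}) :
    ∃ j, #(grp g j) ≤ 2 * #{i ∈ grp g j | p i} := by
  obtain ⟨j, -, hj⟩ := exists_le_of_sum_le univ_nonempty (f := fun j => #(grp g j))
    (g := fun j => 2 * #{i ∈ grp g j | p i})
    (by rwa [← mul_sum, sum_card_filter_grp, sum_card_grp])
  exact ⟨j, hj⟩

theorem card_filter_le_mul_sub_le_sum_abs_sub {ι : Type*} (s : Finset ι) (x : ι → ℝ)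
    (a y : ℝ) : #{i ∈ s | x i ≤ a} * (y - a) ≤ ∑ i ∈ s, |y - x i| :=
  calc #{i ∈ s | x i ≤ a} * (y - a) = ∑ _i ∈ s with x _i ≤ a, (y - a) := by
        rw [sum_const, nsmul_eq_mul]
    _ ≤ ∑ i ∈ s with x i ≤ a, |y - x i| := sum_le_sum fun i hi =>
        (sub_le_sub_left (mem_filter.mp hi).2 y).trans (le_abs_self _)
    _ ≤ ∑ i ∈ s, |y - x i| :=
        sum_le_sum_of_subset_of_nonneg (filter_subset _ _) fun i _ _ => abs_nonneg _

theorem half_sub_le_sum_abs_sub_div_card {ι : Type*} {s : Finset ι} (hs : s.Nonempty)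
    (x : ι → ℝ) (a y : ℝ) (hsa : #s ≤ 2 * #{i ∈ s | x i ≤ a}) :
    (y - a) / 2 ≤ (∑ i ∈ s, |y - x i|) / #s := by
  have hcard : (0 : ℝ) < #s := by exact_mod_cast hs.card_pos
  have hsum_nonneg : 0 ≤ ∑ i ∈ s, |y - x i| := sum_nonneg fun i _ => abs_nonneg _
  have hsa' : (#s : ℝ) ≤ 2 * #{i ∈ s | x i ≤ a} := by exact_mod_cast hsa
  rw [div_le_div_iff₀ two_pos hcard]
  rcases lt_or_ge y a with hya | hay
  · nlinarith
  calc (y - a) * #s ≤ (y - a) * (2 * #{i ∈ s | x i ≤ a}) :=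
        mul_le_mul_of_nonneg_left hsa' (sub_nonneg.mpr hay)
    _ ≤ (∑ i ∈ s, |y - x i|) * 2 := by
        linarith [card_filter_le_mul_sub_le_sum_abs_sub s x a y]

theorem avgc_le_magc (x : Fin n → ℝ) (g : Fin n → Fin m) (j : Fin m) (y : ℝ) :
    avgc x g j y ≤ magc x g y :=
  le_ciSup (f := fun j => (∑ i ∈ grp g j, |y - x i|) / #(grp g j)) (Finite.bddAbove_range _) j

theorem stmt10_general [NeZero m] (x : Fin n → ℝ) (g : Fin n → Fin m)
    (hg : Function.Surjective g) (ystar : ℝ) :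
    (∃ j : Fin m,
      (grp g j).card ≤ 2 * ((grp g j).filter (fun i => x i ≤ allMedian x)).card) ∧
    (ystar - allMedian x) / 2 ≤ magc x g ystar := by
  obtain ⟨j, hj⟩ :=
    exists_grp_card_le_two_mul_card_filter g _ (card_le_two_mul_card_le_allMedian x)
  refine ⟨⟨j, hj⟩, ?_⟩
  obtain ⟨i, rfl⟩ := hg j
  have hne : (grp g (g i)).Nonempty := ⟨i, by simp [grp]⟩
  exact (half_sub_le_sum_abs_sub_div_card hne x _ ystar hj).trans (avgc_le_magc x g _ ystar)

/-- If the optimum `y*` of the maximum average group cost lies strictly to the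
right of the median of all agents, then some group has at least half of its
members at or to the left of the median, and consequently
`magc y* ≥ (y* - x_med)/2`. -/
theorem stmt10 [NeZero m] (x : Fin n → ℝ) (g : Fin n → Fin m)
    (hg : Function.Surjective g) (ystar : ℝ)
    (hopt : ∀ z : ℝ, magc x g ystar ≤ magc x g z)
    (hlt : allMedian x < ystar) :
    (∃ j : Fin m,
      (grp g j).card ≤ 2 * ((grp g j).filter (fun i => x i ≤ allMedian x)).card) ∧
    (ystar - allMedian x) / 2 ≤ magc x g ystar :=
  stmt10_general x g hg ystar
end

section
/- The Narrow Randomized Mechanism (NRM) is strategyproof in expectation: no agent can strictly decrease her expected distance to the facility by misreporting her location. -/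
open Finset

variable {n m : ℕ}

/-- Leftmost group median. -/
noncomputable def xml [NeZero m] (x : Fin n → ℝ) (g : Fin n → Fin m) : ℝ :=
  Finset.univ.inf' Finset.univ_nonempty (groupMedian x g)

/-- Rightmost group median. -/
noncomputable def xmr [NeZero m] (x : Fin n → ℝ) (g : Fin n → Fin m) : ℝ :=
  Finset.univ.sup' Finset.univ_nonempty (groupMedian x g)

/-- Expected distance from point `z` to the facility under NRM, which places
the facility at `x_ml` w.p. 1/4, at `x_mr` w.p. 1/4, and at their midpoint
w.p. 1/2. -/
noncomputable def NRMcost [NeZero m] (x : Fin n → ℝ) (g : Fin n → Fin m) (z : ℝ) : ℝ :=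
  1/4 * |xml x g - z| + 1/4 * |xmr x g - z| + 1/2 * |(xml x g + xmr x g) / 2 - z|

/-!
A misreport by agent `i` only changes the median of her own group, and the left median is
strategyproof: the new median lies on the far side of the old one as seen from `x i`. Since
the extreme medians are the minimum and maximum of the group medians, each of them either
stays put or moves away from `x i` as well. Moving an endpoint away from `x i` by `Δ` raises
its quarter-weighted distance by `Δ/4` and shifts the midpoint by `Δ/2`, which lowers the
half-weighted midpoint distance by at most `Δ/4`.
-/

open Function

theorem List.Pairwise.getElem_le_iff_lt_countP {α : Type*} [LinearOrder α] {L : List α}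
    (hL : L.Pairwise (· ≤ ·)) {r : ℕ} (hr : r < L.length) (a : α) :
    L[r] ≤ a ↔ r < L.countP (· ≤ a) := by
  have hsplit : L.take r ++ L[r] :: L.drop (r + 1) = L := by
    rw [List.getElem_cons_drop, List.take_append_drop]
  have hlen : (L.take r).length = r := List.length_take_of_le hr.le
  obtain ⟨-, hright, hleft⟩ := List.pairwise_append.mp (hsplit ▸ hL)
  have hcount : L.countP (· ≤ a) = (L.take r).countP (· ≤ a) +
      (L.drop (r + 1)).countP (· ≤ a) + if L[r] ≤ a then 1 else 0 := by
    conv_lhs => rw [← hsplit]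
    simp only [List.countP_append, List.countP_cons, decide_eq_true_eq]
    omega
  rw [hcount]
  constructor
  · intro h
    have htake : (L.take r).countP (· ≤ a) = r := by
      conv_rhs => rw [← hlen]
      refine List.countP_eq_length.mpr fun b hb => ?_
      simpa using (hleft b hb L[r] List.mem_cons_self).trans h
    simp [htake, h]
  · intro h
    by_contra hgt
    have hdrop : (L.drop (r + 1)).countP (· ≤ a) = 0 := by
      rw [List.countP_eq_zero]
      intro b hb
      simpa using (not_le.mp hgt).trans_le (List.rel_of_pairwise_cons hright hb)
    have htake := (L.take r).countP_le_length (p := (· ≤ a))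
    simp only [hdrop, hgt, if_false] at h
    omega

theorem medianOf_le_iff {s : Multiset ℝ} (hs : s ≠ 0) (a : ℝ) :
    medianOf s ≤ a ↔ (Multiset.card s - 1) / 2 < s.countP (· ≤ a) := by
  have hlen : (s.sort (· ≤ ·)).length = Multiset.card s := Multiset.length_sort _
  have hr : (Multiset.card s - 1) / 2 < (s.sort (· ≤ ·)).length := by
    have hpos := Multiset.card_pos.mpr hs
    omega
  have hcount : s.countP (· ≤ a) = (s.sort (· ≤ ·)).countP (· ≤ a) := by
    rw [← Multiset.coe_countP, Multiset.sort_eq]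
  rw [medianOf, List.getD_eq_getElem _ _ hr, hcount]
  exact (Multiset.pairwise_sort s _).getElem_le_iff_lt_countP hr a

theorem medianOf_cons_le_iff (T : Multiset ℝ) (z a : ℝ) :
    medianOf (z ::ₘ T) ≤ a ↔ Multiset.card T / 2 < (z ::ₘ T).countP (· ≤ a) := by
  simpa using medianOf_le_iff (Multiset.cons_ne_zero (a := z) (m := T)) a

theorem medianOf_cons_mem_uIcc (T : Multiset ℝ) (z x' : ℝ) :
    medianOf (z ::ₘ T) ∈ Set.uIcc z (medianOf (x' ::ₘ T)) := by
  set μ := medianOf (z ::ₘ T)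
  set μ' := medianOf (x' ::ₘ T)
  have hcount (y a : ℝ) : T.countP (· ≤ a) ≤ (y ::ₘ T).countP (· ≤ a) ∧
      (y ::ₘ T).countP (· ≤ a) ≤ T.countP (· ≤ a) + 1 := by
    rw [Multiset.countP_cons]
    split_ifs <;> omega
  rcases lt_trichotomy μ z with hlt | heq | hgt
  · refine Set.mem_uIcc.mpr (Or.inr ⟨?_, hlt.le⟩)
    have hμ := (medianOf_cons_le_iff T z μ).mp le_rfl
    rw [Multiset.countP_cons, if_neg (not_le.mpr hlt), add_zero] at hμ
    exact (medianOf_cons_le_iff T x' μ).mpr (hμ.trans_le (hcount x' μ).1)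
  · exact heq ▸ Set.left_mem_uIcc
  · refine Set.mem_uIcc.mpr (Or.inl ⟨hgt.le, ?_⟩)
    by_contra! hμ'
    have ha : ¬ μ ≤ max μ' z := not_le.mpr (max_lt hμ' hgt)
    rw [medianOf_cons_le_iff, Multiset.countP_cons, if_pos (le_max_right μ' z)] at ha
    have hμ'le := (medianOf_cons_le_iff T x' _).mp (le_max_left μ' z)
    have hcons := (hcount x' (max μ' z)).2
    omega

theorem Finset.inf'_mem_uIcc_inf'_update {ι α : Type*} [DecidableEq ι] [LinearOrder α]
    {s : Finset ι} (hs : s.Nonempty) (f : ι → α) {j : ι} (hj : j ∈ s) {z t : α}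
    (h : f j ∈ Set.uIcc z t) :
    s.inf' hs f ∈ Set.uIcc z (s.inf' hs (update f j t)) := by
  have hinf_le {f₁ f₂ : ι → α} (hf : ∀ i, f₁ i ≤ f₂ i) :
      s.inf' hs f₁ ≤ s.inf' hs f₂ :=
    Finset.le_inf' hs _ fun i hi => (Finset.inf'_le f₁ hi).trans (hf i)
  rcases Set.mem_uIcc.mp h with ⟨hzj, hjt⟩ | ⟨htj, hjz⟩
  · have hle : s.inf' hs f ≤ s.inf' hs (update f j t) :=
      hinf_le fun i => by rcases eq_or_ne i j with rfl | hne <;> simp [*]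
    rcases le_or_gt z (s.inf' hs f) with hz | hz
    · exact Set.mem_uIcc.mpr (Or.inl ⟨hz, hle⟩)
    -- the minimum lies left of `z`, hence is attained away from `j` and does not move
    obtain ⟨k, hk, hfk⟩ := s.exists_mem_eq_inf' hs f
    have hkj : k ≠ j := by rintro rfl; exact (hfk ▸ hz).not_ge hzj
    have hge : s.inf' hs (update f j t) ≤ s.inf' hs f :=
      (Finset.inf'_le _ hk).trans_eq (by rw [hfk, update_of_ne hkj])
    exact Set.mem_uIcc.mpr (Or.inr ⟨hge, hz.le⟩)
  · have hle : s.inf' hs (update f j t) ≤ s.inf' hs f :=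
      hinf_le fun i => by rcases eq_or_ne i j with rfl | hne <;> simp [*]
    exact Set.mem_uIcc.mpr (Or.inr ⟨hle, (Finset.inf'_le f hj).trans hjz⟩)

theorem Finset.sup'_mem_uIcc_sup'_update {ι α : Type*} [DecidableEq ι] [LinearOrder α]
    {s : Finset ι} (hs : s.Nonempty) (f : ι → α) {j : ι} (hj : j ∈ s) {z t : α}
    (h : f j ∈ Set.uIcc z t) :
    s.sup' hs f ∈ Set.uIcc z (s.sup' hs (update f j t)) := by
  have := Finset.inf'_mem_uIcc_inf'_update (α := αᵒᵈ) hs f hj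
    (z := OrderDual.toDual z) (t := OrderDual.toDual t) (by rwa [Set.uIcc_toDual])
  change OrderDual.toDual (s.sup' hs f) ∈
    Set.uIcc (OrderDual.toDual z) (OrderDual.toDual (s.sup' hs (update f j t))) at this
  rwa [Set.uIcc_toDual] at this

noncomputable def nrmExpectedDist (l r z : ℝ) : ℝ :=
  1/4 * |l - z| + 1/4 * |r - z| + 1/2 * |(l + r) / 2 - z|

theorem nrmExpectedDist_comm (l r z : ℝ) : nrmExpectedDist l r z = nrmExpectedDist r l z := by
  unfold nrmExpectedDist
  rw [add_comm l r]
  ring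

theorem nrmExpectedDist_le_of_mem_uIcc_right (l : ℝ) {r r' z : ℝ} (hr : r ∈ Set.uIcc z r') :
    nrmExpectedDist l r z ≤ nrmExpectedDist l r' z := by
  have hend : |r' - z| = |r - z| + |r' - r| := by
    rcases Set.mem_uIcc.mp hr with ⟨h₁, h₂⟩ | ⟨h₁, h₂⟩
    · rw [abs_of_nonneg (by linarith), abs_of_nonneg (by linarith), abs_of_nonneg (by linarith)]
      ring
    · rw [abs_of_nonpos (by linarith), abs_of_nonpos (by linarith), abs_of_nonpos (by linarith)]
      ring
  have hmid : |(l + r) / 2 - z| ≤ |(l + r') / 2 - z| + |r' - r| / 2 := by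
    calc |(l + r) / 2 - z| = |((l + r') / 2 - z) - (r' - r) / 2| := by ring_nf
      _ ≤ |(l + r') / 2 - z| + |(r' - r) / 2| := abs_sub _ _
      _ = |(l + r') / 2 - z| + |r' - r| / 2 := by rw [abs_div, abs_two]
  unfold nrmExpectedDist
  linarith

theorem nrmExpectedDist_le_of_mem_uIcc {l l' r r' z : ℝ} (hl : l ∈ Set.uIcc z l')
    (hr : r ∈ Set.uIcc z r') : nrmExpectedDist l r z ≤ nrmExpectedDist l' r' z :=
  calc nrmExpectedDist l r z ≤ nrmExpectedDist l r' z := nrmExpectedDist_le_of_mem_uIcc_right l hr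
    _ = nrmExpectedDist r' l z := nrmExpectedDist_comm ..
    _ ≤ nrmExpectedDist r' l' z := nrmExpectedDist_le_of_mem_uIcc_right r' hl
    _ = nrmExpectedDist l' r' z := nrmExpectedDist_comm ..

theorem grp_val_map_update (x : Fin n → ℝ) (g : Fin n → Fin m) (i : Fin n) (x' : ℝ) :
    (grp g (g i)).val.map (update x i x') = x' ::ₘ ((grp g (g i)).erase i).val.map x := by
  have hi : i ∈ grp g (g i) := by simp [grp]
  rw [← Multiset.cons_erase (Finset.mem_val.mpr hi), Multiset.map_cons, update_self,
    ← Finset.erase_val]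
  congr 1
  refine Multiset.map_congr rfl fun k hk => update_of_ne ?_ _ _
  exact (Finset.mem_erase.mp (Finset.mem_val.mp hk)).1

theorem groupMedian_update (x : Fin n → ℝ) (g : Fin n → Fin m) (i : Fin n) (x' : ℝ) :
    groupMedian (update x i x') g = update (groupMedian x g) (g i)
      (medianOf (x' ::ₘ ((grp g (g i)).erase i).val.map x)) := by
  funext j
  rcases eq_or_ne j (g i) with rfl | hj
  · rw [update_self, groupMedian, grp_val_map_update]
  · rw [update_of_ne hj, groupMedian, groupMedian]
    refine congrArg medianOf (Multiset.map_congr rfl fun k hk => update_of_ne ?_ _ _)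
    rintro rfl
    exact hj (Finset.mem_filter.mp (Finset.mem_val.mp hk)).2.symm

theorem stmt11_general [NeZero m] (x : Fin n → ℝ) (g : Fin n → Fin m)
    (i : Fin n) (x' : ℝ) :
    NRMcost x g (x i) ≤ NRMcost (Function.update x i x') g (x i) := by
  set T := ((grp g (g i)).erase i).val.map x
  have hmedian : groupMedian x g (g i) ∈ Set.uIcc (x i) (medianOf (x' ::ₘ T)) := by
    have hself := grp_val_map_update x g i (x i)
    rw [update_eq_self] at hself
    rw [groupMedian, hself]
    exact medianOf_cons_mem_uIcc T (x i) x'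
  change nrmExpectedDist (xml x g) (xmr x g) (x i) ≤
    nrmExpectedDist (xml (update x i x') g) (xmr (update x i x') g) (x i)
  rw [xml, xml, xmr, xmr, groupMedian_update]
  exact nrmExpectedDist_le_of_mem_uIcc
    (Finset.inf'_mem_uIcc_inf'_update _ _ (Finset.mem_univ _) hmedian)
    (Finset.sup'_mem_uIcc_sup'_update _ _ (Finset.mem_univ _) hmedian)

/-- The Narrow Randomized Mechanism is strategyproof in expectation: no agent
can strictly decrease her expected distance to the facility by misreporting. -/
theorem stmt11 [NeZero m] (x : Fin n → ℝ) (g : Fin n → Fin m)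
    (hg : Function.Surjective g) (i : Fin n) (x' : ℝ) :
    NRMcost x g (x i) ≤ NRMcost (Function.update x i x') g (x i) :=
  stmt11_general x g i x'
end

section
/- The standard Randomized Mechanism (RM: leftmost with prob 1/4, rightmost with prob 1/4, midpoint with prob 1/2) has approximation ratio at least (n+2)/4 for the maximum average group cost: on the profile with one agent at 0, one at 1, and n-2 at 1/2, all in one group, RM's expected magc is (n+2)/(4n) while the optimum is 1/n. -/
open Finset

variable {n m : ℕ}

theorem magc_of_fin_one (x : Fin n → ℝ) (g : Fin n → Fin 1) (y : ℝ) :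
    magc x g y = (∑ i, |y - x i|) / n := by
  have hgrp : grp g 0 = univ := by
    ext i
    simp [grp, Subsingleton.elim (g i) 0]
  rw [magc, ciSup_unique, Fin.default_eq_zero, hgrp, card_univ, Fintype.card_fin]

theorem sum_abs_sub_eq_of_profile (k : ℕ) (x : Fin (k + 2) → ℝ)
    (hx : ∀ i : Fin (k + 2), x i = if (i : ℕ) = 0 then 0 else if (i : ℕ) = 1 then 1 else 1/2)
    (y : ℝ) :
    ∑ i, |y - x i| = |y| + |y - 1| + k * |y - 1/2| := by
  have hx0 : x 0 = 0 := by simp [hx]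
  have hx1 : x 1 = 1 := by simp [hx]
  have hmid : ∀ i : Fin k, x i.succ.succ = 1/2 := fun i => by simp [hx]
  simp only [Fin.sum_univ_succ, Fin.succ_zero_eq_one, hx0, hx1, hmid, sub_zero, sum_const,
    card_univ, Fintype.card_fin, nsmul_eq_mul]
  ring

theorem one_le_abs_add_abs_sub_one (y : ℝ) : 1 ≤ |y| + |y - 1| := by
  simpa using abs_sub_le 0 y 1

/-- On the single-group profile with one agent at `0`, one at `1` and `n - 2`
at `1/2`, the Randomized Mechanism's expected maximum average group cost is
`(n+2)/(4n)` while the optimum (at `1/2`) is `1/n`; hence RM has approximation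
ratio at least `(n+2)/4` for `magc`. -/
theorem stmt15 (n : ℕ) (hn : 3 ≤ n) (x : Fin n → ℝ) (g : Fin n → Fin 1)
    (hx : ∀ i : Fin n, x i = if (i : ℕ) = 0 then 0 else if (i : ℕ) = 1 then 1 else 1/2) :
    1/4 * magc x g 0 + 1/4 * magc x g 1 + 1/2 * magc x g (1/2)
        = ((n : ℝ) + 2) / (4 * n) ∧
    magc x g (1/2) = 1 / (n : ℝ) ∧
    ∀ y : ℝ, 1 / (n : ℝ) ≤ magc x g y := by
  obtain ⟨k, rfl⟩ : ∃ k, n = k + 2 := ⟨n - 2, by omega⟩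
  have hcost : ∀ y, magc x g y = (|y| + |y - 1| + k * |y - 1/2|) / (k + 2) := fun y => by
    rw [magc_of_fin_one, sum_abs_sub_eq_of_profile k x hx]
    push_cast
    ring
  have hk : (k : ℝ) + 2 ≠ 0 := by positivity
  have hcost0 : magc x g 0 = 1/2 := by
    rw [hcost, div_eq_iff hk]
    norm_num
    ring
  have hcost1 : magc x g 1 = 1/2 := by
    rw [hcost, div_eq_iff hk]
    norm_num
    ring
  have hcost_half : magc x g (1/2) = 1 / (k + 2) := by
    rw [hcost]
    norm_num
  refine ⟨?_, by exact_mod_cast hcost_half, fun y => ?_⟩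
  · rw [hcost0, hcost1, hcost_half]
    push_cast
    field_simp
    ring
  · rw [hcost]
    push_cast
    gcongr
    linarith [one_le_abs_add_abs_sub_one y, mul_nonneg k.cast_nonneg (abs_nonneg (y - 1/2))]
end

section
/- For any k, the k-th Location Deterministic Mechanism (place facility at the k-th smallest agent location) has approximation ratio at most 4 for the objective IIF_1: for any profile r with output y = x_(k), IIF_1(y, r) <= 4 * IIF_1(y*, r) for the optimal y*. -/
open Finset

variable {n m : ℕ}

/-! Every agent of every group lies within `IIF1 x g z` of `z`, since a group's average cost is at
least its minimum cost. The output `x k` is itself an agent, so it lies within `IIF1 x g z` of `z`,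
and by the triangle inequality every agent lies within `2 * IIF1 x g z` of `x k`. Finally
`IIF1` is at most twice the largest maximum cost, as both the average cost and the spread
`maxc - minc` of a group are bounded by its maximum cost. -/

section GroupCosts

variable (x : Fin n → ℝ) (g : Fin n → Fin m) (j : Fin m) (y : ℝ)

lemma abs_sub_le_maxc {i : Fin n} (hi : g i = j) : |y - x i| ≤ maxc x g j y :=
  le_csSup (Set.toFinite _).bddAbove ⟨i, hi, rfl⟩

lemma maxc_nonneg : 0 ≤ maxc x g j y :=
  Real.sSup_nonneg <| by rintro _ ⟨i, -, rfl⟩; positivity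

lemma minc_nonneg : 0 ≤ minc x g j y :=
  Real.sInf_nonneg <| by rintro _ ⟨i, -, rfl⟩; positivity

lemma maxc_le_abs_sub_add_maxc (z : ℝ) : maxc x g j y ≤ |y - z| + maxc x g j z := by
  refine Real.sSup_le ?_ (add_nonneg (abs_nonneg _) (maxc_nonneg x g j z))
  rintro _ ⟨i, hi, rfl⟩
  calc |y - x i| ≤ |y - z| + |z - x i| := abs_sub_le _ _ _
    _ ≤ |y - z| + maxc x g j z := by gcongr; exact abs_sub_le_maxc x g j z hi

lemma avgc_le_maxc : avgc x g j y ≤ maxc x g j y := by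
  refine div_le_of_le_mul₀ (Nat.cast_nonneg _) (maxc_nonneg x g j y) ?_
  calc ∑ i ∈ grp g j, |y - x i| ≤ ∑ _i ∈ grp g j, maxc x g j y :=
        sum_le_sum fun i hi => abs_sub_le_maxc x g j y (mem_filter.mp hi).2
    _ = maxc x g j y * (grp g j).card := by rw [sum_const, nsmul_eq_mul, mul_comm]

/-- For an empty group both sides are the junk value `0`. -/
lemma minc_le_avgc : minc x g j y ≤ avgc x g j y := by
  rcases (grp g j).eq_empty_or_nonempty with hempty | hne
  · have : {i | g i = j} = ∅ := Set.eq_empty_of_forall_notMem fun i hi =>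
      eq_empty_iff_forall_notMem.mp hempty i (mem_filter.mpr ⟨mem_univ i, hi⟩)
    simp [minc, avgc, hempty, this]
  · rw [avgc, le_div_iff₀ (by exact_mod_cast hne.card_pos)]
    calc minc x g j y * (grp g j).card = ∑ _i ∈ grp g j, minc x g j y := by
          rw [sum_const, nsmul_eq_mul, mul_comm]
      _ ≤ ∑ i ∈ grp g j, |y - x i| :=
          sum_le_sum fun i hi => csInf_le (Set.toFinite _).bddBelow ⟨i, (mem_filter.mp hi).2, rfl⟩

lemma maxc_le_IIF1 : maxc x g j y ≤ IIF1 x g y := by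
  have havg : avgc x g j y ≤ ⨆ j', avgc x g j' y :=
    le_ciSup (f := fun j' => avgc x g j' y) (Finite.bddAbove_range _) j
  have hspread : maxc x g j y - minc x g j y ≤ ⨆ j', (maxc x g j' y - minc x g j' y) :=
    le_ciSup (f := fun j' => maxc x g j' y - minc x g j' y) (Finite.bddAbove_range _) j
  have := minc_le_avgc x g j y
  rw [IIF1]
  linarith

lemma IIF1_le_two_mul_of_maxc_le [Nonempty (Fin m)] {c : ℝ} (h : ∀ j, maxc x g j y ≤ c) :
    IIF1 x g y ≤ 2 * c := by
  have havg : (⨆ j, avgc x g j y) ≤ c := ciSup_le fun j => (avgc_le_maxc x g j y).trans (h j)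
  have hspread : (⨆ j, (maxc x g j y - minc x g j y)) ≤ c :=
    ciSup_le fun j => by linarith [h j, minc_nonneg x g j y]
  rw [IIF1]
  linarith

end GroupCosts

theorem stmt16_general (x : Fin n → ℝ) (g : Fin n → Fin m)
    (k : Fin n) (ystar : ℝ) :
    IIF1 x g (x k) ≤ 4 * IIF1 x g ystar := by
  have : Nonempty (Fin m) := ⟨g k⟩
  have hk : |x k - ystar| ≤ IIF1 x g ystar := by
    rw [abs_sub_comm]
    exact (abs_sub_le_maxc x g (g k) ystar rfl).trans (maxc_le_IIF1 x g (g k) ystar)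
  have hmax : ∀ j, maxc x g j (x k) ≤ 2 * IIF1 x g ystar := fun j => by
    linarith [maxc_le_abs_sub_add_maxc x g j (x k) ystar, maxc_le_IIF1 x g j ystar]
  linarith [IIF1_le_two_mul_of_maxc_le x g (x k) hmax]

/-- The k-th Location Deterministic Mechanism (facility at the k-th smallest
agent location) has approximation ratio at most 4 for the objective `IIF₁`. -/
theorem stmt16 [NeZero m] (x : Fin n → ℝ) (g : Fin n → Fin m)
    (hx : Monotone x) (hg : Function.Surjective g) (k : Fin n) (ystar : ℝ)
    (hopt : ∀ z : ℝ, IIF1 x g ystar ≤ IIF1 x g z) :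
    IIF1 x g (x k) ≤ 4 * IIF1 x g ystar :=
  stmt16_general x g k ystar
end

section
/- Any deterministic strategyproof mechanism has an approximation ratio of at least 4 for minimizing IIF_1. Formally, for every epsilon > 0, no deterministic partial-group-strategyproof mechanism achieves approximation ratio 4 - epsilon for IIF_1 on all profiles with two groups. -/
open Finset

variable {n m : ℕ}

/-- Partial group strategyproofness for a mechanism defined on all two-group
profiles: a set of co-located agents cannot strictly benefit by jointly
misreporting their locations. -/
def PGSP (f : ∀ n : ℕ, (Fin n → ℝ) → (Fin n → Fin 2) → ℝ) : Prop :=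
  ∀ (n : ℕ) (x : Fin n → ℝ) (g : Fin n → Fin 2) (S : Finset (Fin n)) (x0 x' : ℝ),
    (∀ i ∈ S, x i = x0) →
    |f n x g - x0| ≤ |f n (fun i => if i ∈ S then x' else x i) g - x0|


/-!
Fix `k` with `2 < ε (k + 1)` and consider the profile in which one point holds one agent of
group `0` and `k` agents of group `1`, and another point one agent of group `1` and `k` of
group `0`.
With the points at distance `t`, a facility at either point costs `k t / (k + 1) + t` (the average
of the group that is mostly at the other point, plus the full spread of a group), whereas the
midpoint costs `t / 2`; the ratio `(4k + 2) / (k + 1)` exceeds `4 - ε`.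

Let `p` be the mechanism's output for the points `0, 1`, and move the agents of one point to `p`,
choosing the point so that the two locations stay distinct. Strategyproofness of these co-located
agents (who could report their old location and get the facility exactly at `p`) forces the
facility to stay at `p`, which is now one of the two points.
-/

section IIF1

variable {n m : ℕ} {x : Fin n → ℝ} {g : Fin n → Fin m} {y : ℝ}

lemma avgc_add_maxc_sub_minc_le_IIF1 (j j' : Fin m) :
    avgc x g j y + (maxc x g j' y - minc x g j' y) ≤ IIF1 x g y :=
  add_le_add (le_ciSup (Set.finite_range (fun j => avgc x g j y)).bddAbove j)
    (le_ciSup (Set.finite_range (fun j => maxc x g j y - minc x g j y)).bddAbove j')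

lemma abs_sub_abs_le_maxc_sub_minc {j : Fin m} {i i' : Fin n} (hi : g i = j) (hi' : g i' = j) :
    |y - x i| - |y - x i'| ≤ maxc x g j y - minc x g j y := by
  have hfin : ((fun i => |y - x i|) '' {i | g i = j}).Finite := Set.toFinite _
  exact sub_le_sub (le_csSup hfin.bddAbove ⟨i, hi, rfl⟩)
    (csInf_le hfin.bddBelow ⟨i', hi', rfl⟩)

lemma IIF1_eq_of_forall_abs_eq [NeZero m] (hg : Function.Surjective g) {d : ℝ}
    (hd : ∀ i, |y - x i| = d) : IIF1 x g y = d := by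
  have himage (j : Fin m) : (fun i => |y - x i|) '' {i | g i = j} = {d} := by
    obtain ⟨i, hi⟩ := hg j
    simp only [hd]
    exact Set.Nonempty.image_const ⟨i, hi⟩ d
  have havgc (j : Fin m) : avgc x g j y = d := by
    obtain ⟨i, hi⟩ := hg j
    have hcard : ((grp g j).card : ℝ) ≠ 0 := by
      exact_mod_cast (Finset.card_pos.mpr ⟨i, by simp [grp, hi]⟩).ne'
    simp only [avgc, hd, Finset.sum_const, nsmul_eq_mul]
    field_simp
  simp [IIF1, havgc, maxc, minc, himage]

end IIF1

lemma PGSP.apply_eq_of_move {f : ∀ n : ℕ, (Fin n → ℝ) → (Fin n → Fin 2) → ℝ} (hf : PGSP f)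
    {n : ℕ} {x : Fin n → ℝ} {g : Fin n → Fin 2} {S : Finset (Fin n)} {x₀ x' : ℝ}
    (hS : ∀ i ∈ S, x i = x₀) (hmove : f n (fun i => if i ∈ S then x' else x i) g = x₀) :
    f n x g = x₀ := by
  have h := hf n x g S x₀ x' hS
  rw [hmove, sub_self, abs_zero] at h
  exact sub_eq_zero.mp (abs_nonpos_iff.mp h)

lemma Fin.eq_rev_of_ne {s j : Fin 2} (h : s ≠ j) : s = j.rev := by
  fin_cases s <;> fin_cases j <;> simp_all

section CrossProfile

variable (k : ℕ)

/- The profile of the lower bound: side `s`, at `ℓ s`, holds one agent of group `s` (rank `0`) and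
`k` agents of the other group. Agents are indexed by (side, rank) through `finProdFinEquiv`. -/
def crossSide (i : Fin (2 * (k + 1))) : Fin 2 := (finProdFinEquiv.symm i).1

def crossRank (i : Fin (2 * (k + 1))) : Fin (k + 1) := (finProdFinEquiv.symm i).2

def crossGroup (i : Fin (2 * (k + 1))) : Fin 2 :=
  if crossRank k i = 0 then crossSide k i else (crossSide k i).rev

def crossLoc (ℓ : Fin 2 → ℝ) (i : Fin (2 * (k + 1))) : ℝ := ℓ (crossSide k i)

lemma exists_crossGroup_eq_crossSide_eq (hk : 1 ≤ k) (j s : Fin 2) :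
    ∃ i, crossGroup k i = j ∧ crossSide k i = s := by
  by_cases hs : s = j
  · exact ⟨finProdFinEquiv (s, 0), by simp [crossGroup, crossSide, crossRank, hs]⟩
  · refine ⟨finProdFinEquiv (s, ⟨1, by omega⟩), ?_, by simp [crossSide]⟩
    have hr : (⟨1, by omega⟩ : Fin (k + 1)) ≠ 0 := Fin.ne_of_val_ne one_ne_zero
    simpa [crossGroup, crossSide, crossRank, hr] using (Fin.eq_rev_of_ne (Ne.symm hs)).symm

lemma crossGroup_surjective : Function.Surjective (crossGroup k) := fun j =>
  ⟨finProdFinEquiv (j, 0), by simp [crossGroup, crossRank, crossSide]⟩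

lemma sum_grp_crossGroup (c : Fin 2 → ℝ) (j : Fin 2) :
    ∑ i ∈ grp (crossGroup k) j, c (crossSide k i) = c j + k * c j.rev := by
  rw [grp, Finset.sum_filter,
    ← finProdFinEquiv.sum_comp (fun i => if crossGroup k i = j then c (crossSide k i) else 0)]
  fin_cases j <;>
    simp [crossGroup, crossRank, crossSide, Fintype.sum_prod_type, Fin.sum_univ_succ, add_comm]

lemma card_grp_crossGroup (j : Fin 2) : ((grp (crossGroup k) j).card : ℝ) = k + 1 := by
  simpa [add_comm] using sum_grp_crossGroup k (fun _ => 1) j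

lemma le_IIF1_crossLoc_side (hk : 1 ≤ k) (ℓ : Fin 2 → ℝ) (j : Fin 2) :
    k * |ℓ j - ℓ j.rev| / (k + 1) + |ℓ j - ℓ j.rev| ≤
      IIF1 (crossLoc k ℓ) (crossGroup k) (ℓ j) := by
  have havgc : avgc (crossLoc k ℓ) (crossGroup k) j (ℓ j) = k * |ℓ j - ℓ j.rev| / (k + 1) := by
    simp only [avgc, crossLoc]
    rw [sum_grp_crossGroup k (fun s => |ℓ j - ℓ s|), card_grp_crossGroup, sub_self, abs_zero,
      zero_add]
  obtain ⟨i, hi, hside⟩ := exists_crossGroup_eq_crossSide_eq k hk j j.rev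
  obtain ⟨i', hi', hside'⟩ := exists_crossGroup_eq_crossSide_eq k hk j j
  have hspread := abs_sub_abs_le_maxc_sub_minc (x := crossLoc k ℓ) (y := ℓ j) hi hi'
  rw [crossLoc, crossLoc, hside, hside', sub_self, abs_zero, sub_zero] at hspread
  calc k * |ℓ j - ℓ j.rev| / (k + 1) + |ℓ j - ℓ j.rev|
      ≤ avgc (crossLoc k ℓ) (crossGroup k) j (ℓ j) + (maxc (crossLoc k ℓ) (crossGroup k) j (ℓ j) -
          minc (crossLoc k ℓ) (crossGroup k) j (ℓ j)) := by
        rw [havgc]; gcongr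
    _ ≤ IIF1 (crossLoc k ℓ) (crossGroup k) (ℓ j) := avgc_add_maxc_sub_minc_le_IIF1 j j

lemma IIF1_crossLoc_midpoint (ℓ : Fin 2 → ℝ) (j : Fin 2) :
    IIF1 (crossLoc k ℓ) (crossGroup k) ((ℓ j + ℓ j.rev) / 2) = |ℓ j - ℓ j.rev| / 2 := by
  refine IIF1_eq_of_forall_abs_eq (crossGroup_surjective k) fun i => ?_
  by_cases h : crossSide k i = j
  · rw [crossLoc, h, show (ℓ j + ℓ j.rev) / 2 - ℓ j = -((ℓ j - ℓ j.rev) / 2) by ring, abs_neg,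
      abs_div, abs_two]
  · rw [crossLoc, Fin.eq_rev_of_ne h,
      show (ℓ j + ℓ j.rev) / 2 - ℓ j.rev = (ℓ j - ℓ j.rev) / 2 by ring, abs_div, abs_two]

lemma crossLoc_eq_move (ℓ : Fin 2 → ℝ) (j : Fin 2) (p : ℝ) :
    (fun i => if i ∈ univ.filter (crossSide k · = j) then ℓ j
      else crossLoc k (Function.update ℓ j p) i) = crossLoc k ℓ := by
  funext i
  by_cases h : crossSide k i = j <;> simp [crossLoc, h]

lemma not_IIF1_crossLoc_side_le_midpoint (hk : 1 ≤ k) {ε : ℝ} (hkε : 2 < ε * (k + 1))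
    {ℓ : Fin 2 → ℝ} {j : Fin 2} (hℓ : ℓ j ≠ ℓ j.rev) :
    ¬ IIF1 (crossLoc k ℓ) (crossGroup k) (ℓ j) ≤
      (4 - ε) * IIF1 (crossLoc k ℓ) (crossGroup k) ((ℓ j + ℓ j.rev) / 2) := by
  intro hle
  have ht : 0 < |ℓ j - ℓ j.rev| := abs_pos.mpr (sub_ne_zero.mpr hℓ)
  have h := (le_IIF1_crossLoc_side k hk ℓ j).trans hle
  rw [IIF1_crossLoc_midpoint, div_add' _ _ _ (by positivity), div_le_iff₀ (by positivity)] at h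
  nlinarith

end CrossProfile

/-- Any deterministic partial-group-strategyproof mechanism has approximation
ratio at least 4 for minimizing `IIF₁`: for every `ε > 0` no such mechanism
achieves ratio `4 - ε` on all two-group profiles. -/
theorem stmt18 (ε : ℝ) (hε : 0 < ε) :
    ¬ ∃ f : ∀ n : ℕ, (Fin n → ℝ) → (Fin n → Fin 2) → ℝ, PGSP f ∧
      ∀ (n : ℕ) (x : Fin n → ℝ) (g : Fin n → Fin 2), Function.Surjective g →
        ∀ y : ℝ, IIF1 x g (f n x g) ≤ (4 - ε) * IIF1 x g y := by
  rintro ⟨f, hSP, hratio⟩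
  obtain ⟨k, hk⟩ := exists_nat_gt (2 / ε)
  have hk1 : 1 ≤ k := Nat.cast_pos.mp ((div_pos two_pos hε).trans hk)
  have hkε : 2 < ε * (k + 1) := by rw [div_lt_iff₀ hε] at hk; linarith
  set ℓ : Fin 2 → ℝ := ![0, 1]
  set p := f _ (crossLoc k ℓ) (crossGroup k)
  obtain ⟨j, hj⟩ : ∃ j : Fin 2, p ≠ ℓ j.rev := by
    by_cases hp : p = 0
    · exact ⟨0, by simp [ℓ, hp]⟩
    · exact ⟨1, by simpa [ℓ] using hp⟩
  set ℓ' := Function.update ℓ j p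
  have hfacility : f _ (crossLoc k ℓ') (crossGroup k) = ℓ' j := by
    refine (hSP.apply_eq_of_move (S := univ.filter (crossSide k · = j)) (x' := ℓ j) ?_ ?_).trans
      (Function.update_self j p ℓ).symm
    · intro i hi
      simp [crossLoc, ℓ', (mem_filter.mp hi).2]
    · rw [crossLoc_eq_move]
  have hℓ' : ℓ' j ≠ ℓ' j.rev := by
    have hrev : j.rev ≠ j := by fin_cases j <;> decide
    simpa [ℓ', Function.update_of_ne hrev] using hj
  exact not_IIF1_crossLoc_side_le_midpoint k hk1 hkε hℓ'
    (hfacility ▸ hratio _ _ _ (crossGroup_surjective k) _)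
end
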